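/- Let n be a positive integer and q a complex number with q^j ≠ 1 for all 1 ≤ j ≤ n-1. In ℂ[[u,v,w]], define Φ*(1;q) = Σ_{k,r,s ≥ 0} G*(k,r,s;1;q) u^{k-r-s} v^{r-s} w^{s}, where G*(k,r,s;1;q) = Σ_{k ∈ I(k,r,s)} L*_{k}^{(n)}(1;q) is the sum of the star finite q-multiple polylogarithms at t=1 over all indices of weight k, depth r, height s, and G*(0,0,0;1;q) = 1. Then Φ*(1;q) · Π_{j=1}^{n-1} P*(q^j) = Π_{j=1}^{n-1} (1-q^j)(1-u-q^j) holds in ℂ[[u,v,w]], where P*(X) = (1-u-X)(1-v-X) - w. -/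

import Mathlib

/-!
Write `Φₙ` for `Φ*(1;q)` built from `L*^{(n)}`. Splitting off the terms with `m₁ = n` gives
`L*^{(n+1)}_{k₁,…,k_r} = L*^{(n)}_{k₁,…,k_r} + (1-q^n)^{-k₁} L*^{(n+1)}_{k₂,…,k_r}`, and a leading
entry `k₁ = 1` contributes `v` while `k₁ ≥ 2` contributes `u^{k₁-2} w`. Summing the geometric series
in `u`, `Φₙ₊₁ = Φₙ + (v / (1-q^n) + w / ((1-q^n)(1-u-q^n))) Φₙ₊₁`, that is
`Φₙ₊₁ P*(q^n) = (1-q^n)(1-u-q^n) Φₙ`, and the theorem follows by induction from `Φ₁ = 1`.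
-/

open Finset

/-- The set of tuples `(m_1,...,m_r)` with `n > m_1 > m_2 > ... > m_r > 0`. -/
def msets (n r : ℕ) : Finset (Fin r → Fin n) :=
  Finset.univ.filter fun m =>
    (∀ i j : Fin r, i < j → m j < m i) ∧ ∀ i, 0 < (m i : ℕ)

/-- The set of tuples `(m_1,...,m_r)` with `n > m_1 ≥ m_2 ≥ ... ≥ m_r > 0`. -/
def msetsStar (n r : ℕ) : Finset (Fin r → Fin n) :=
  Finset.univ.filter fun m =>
    (∀ i j : Fin r, i ≤ j → m j ≤ m i) ∧ ∀ i, 0 < (m i : ℕ)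

/-- The finite multiple harmonic q-series
`z_n(k_1,…,k_r; q) = Σ_{n > m_1 > … > m_r > 0} Π_i q^{(k_i-1)m_i}/[m_i]_q^{k_i}`,
where `[m]_q = (1-q^m)/(1-q)`. -/
noncomputable def z (n : ℕ) {r : ℕ} (k : Fin r → ℕ) (q : ℂ) : ℂ :=
  ∑ m ∈ msets n r,
    ∏ i, q ^ ((k i - 1) * (m i : ℕ)) / ((1 - q ^ (m i : ℕ)) / (1 - q)) ^ (k i)

/-- The star version `z*_n(k; q)`, summed over `n > m_1 ≥ … ≥ m_r > 0`. -/
noncomputable def zstar (n : ℕ) {r : ℕ} (k : Fin r → ℕ) (q : ℂ) : ℂ :=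
  ∑ m ∈ msetsStar n r,
    ∏ i, q ^ ((k i - 1) * (m i : ℕ)) / ((1 - q ^ (m i : ℕ)) / (1 - q)) ^ (k i)

/-- The modified value `z̄_n(k;q) = (1-q)^{-wt(k)} z_n(k;q)`. -/
noncomputable def zbar (n : ℕ) {r : ℕ} (k : Fin r → ℕ) (q : ℂ) : ℂ :=
  (1 - q)⁻¹ ^ (∑ i, k i) * z n k q

/-- The modified star value `z̄*_n(k;q) = (1-q)^{-wt(k)} z*_n(k;q)`. -/
noncomputable def zstarbar (n : ℕ) {r : ℕ} (k : Fin r → ℕ) (q : ℂ) : ℂ :=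
  (1 - q)⁻¹ ^ (∑ i, k i) * zstar n k q

/-- `I(k,r,s)`: the set of indices (tuples of positive integers) of weight `k`,
depth `r` and height `s`. -/
def indexSet3 (k r s : ℕ) : Finset (Fin r → ℕ) :=
  (Finset.Nat.antidiagonalTuple r k).filter fun a =>
    (∀ i, 1 ≤ a i) ∧ (Finset.univ.filter fun i => 2 ≤ a i).card = s

/-- `I(k,r)`: the set of indices of weight `k` and depth `r`. -/
def indexSet2 (k r : ℕ) : Finset (Fin r → ℕ) :=
  (Finset.Nat.antidiagonalTuple r k).filter fun a => ∀ i, 1 ≤ a i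

/-- The one-variable finite q-multiple polylogarithm
`L_{k_1,…,k_r}^{(n)}(t;q) = Σ_{n > m_1 > … > m_r > 0} t^{m_1} / Π_i (1-q^{m_i})^{k_i}`,
with `L_∅(t) = 1`. -/
noncomputable def Lpoly (n : ℕ) {r : ℕ} (k : Fin r → ℕ) (q t : ℂ) : ℂ :=
  ∑ m ∈ msets n r,
    ∏ i : Fin r, (if i.val = 0 then t ^ (m i : ℕ) else 1) / (1 - q ^ (m i : ℕ)) ^ (k i)

/-- The star version `L*_{k_1,…,k_r}^{(n)}(t;q)`, summed over `n > m_1 ≥ … ≥ m_r > 0`. -/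
noncomputable def LpolyStar (n : ℕ) {r : ℕ} (k : Fin r → ℕ) (q t : ℂ) : ℂ :=
  ∑ m ∈ msetsStar n r,
    ∏ i : Fin r, (if i.val = 0 then t ^ (m i : ℕ) else 1) / (1 - q ^ (m i : ℕ)) ^ (k i)

/-- The variables `x, y, z` (resp. `u, v, w`) of `ℂ[[x,y,z]]`. -/
noncomputable def Xv (i : Fin 3) : MvPowerSeries (Fin 3) ℂ := MvPowerSeries.X i

/-- Constant power series. -/
noncomputable def Cc (c : ℂ) : MvPowerSeries (Fin 3) ℂ := MvPowerSeries.C (σ := Fin 3) (R := ℂ) c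

/-- The generating function `Φ*(1;q)` in `ℂ[[u,v,w]]`: the coefficient of
`u^{k-r-s} v^{r-s} w^s` is `G*(k,r,s;1;q) = Σ_{k ∈ I(k,r,s)} L*_k^{(n)}(1;q)`. -/
noncomputable def PhiStarOne (n : ℕ) (q : ℂ) : MvPowerSeries (Fin 3) ℂ :=
  fun e => ∑ a ∈ indexSet3 (e 0 + e 1 + 2 * e 2) (e 1 + e 2) (e 2), LpolyStar n a q 1


open MvPowerSeries

section Indices

variable {K r s : ℕ}

lemma mem_indexSet3 {a : Fin r → ℕ} :
    a ∈ indexSet3 K r s ↔ ∑ i, a i = K ∧ (∀ i, 1 ≤ a i) ∧ #{i | 2 ≤ a i} = s := by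
  simp [indexSet3, Finset.Nat.mem_antidiagonalTuple]

lemma add_card_filter_le_sum {a : Fin r → ℕ} (ha : ∀ i, 1 ≤ a i) :
    r + #{i | 2 ≤ a i} ≤ ∑ i, a i := by
  rw [card_filter]
  calc r + ∑ i, (if 2 ≤ a i then 1 else 0) = ∑ i, (1 + if 2 ≤ a i then 1 else 0) := by
        simp [sum_add_distrib]
    _ ≤ ∑ i, a i := sum_le_sum fun i _ => by have := ha i; split <;> omega

lemma indexSet3_eq_empty_of_lt (h : r < s) : indexSet3 K r s = ∅ := by
  refine eq_empty_of_forall_notMem fun a ha => ?_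
  have := card_filter_le (univ : Finset (Fin r)) fun i => 2 ≤ a i
  simp only [mem_indexSet3, card_univ, Fintype.card_fin] at ha this
  omega

lemma indexSet3_depth_zero : indexSet3 K 0 s = if K = 0 ∧ s = 0 then {Fin.elim0} else ∅ := by
  ext a
  split_ifs with h <;> simp [mem_indexSet3, Subsingleton.elim a Fin.elim0, eq_comm, h]

lemma cons_mem_indexSet3 {k : ℕ} (hk : 1 ≤ k) {b : Fin r → ℕ} :
    (Fin.cons k b : Fin (r + 1) → ℕ) ∈ indexSet3 (K + k) (r + 1) (s + if 2 ≤ k then 1 else 0) ↔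
      b ∈ indexSet3 K r s := by
  simp only [mem_indexSet3, Fin.sum_cons, Fin.forall_fin_succ, Fin.cons_zero, Fin.cons_succ,
    Fin.card_filter_univ_succ', hk, true_and]
  exact and_congr (by omega) (and_congr_right fun _ => by omega)

lemma head_add_le_of_mem_indexSet3 {a : Fin (r + 1) → ℕ} (ha : a ∈ indexSet3 K (r + 1) s) :
    a 0 + r + s ≤ K + 1 := by
  rw [mem_indexSet3, Fin.sum_univ_succ, Fin.card_filter_univ_succ'] at ha
  obtain ⟨hsum, hpos, hcard⟩ := ha
  have := add_card_filter_le_sum fun i => hpos i.succ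
  split_ifs at hcard <;> omega

lemma head_eq_one_of_mem_indexSet3_zero {a : Fin (r + 1) → ℕ} (ha : a ∈ indexSet3 K (r + 1) 0) :
    a 0 = 1 := by
  rw [mem_indexSet3, Fin.card_filter_univ_succ'] at ha
  have := ha.2.1 0
  split_ifs at ha <;> omega

variable {M : Type*} [AddCommMonoid M]

lemma sum_indexSet3_filter_head_eq {K' s' k : ℕ} (hk : 1 ≤ k) (hK : K' = K + k)
    (hs : s' = s + if 2 ≤ k then 1 else 0) (F : (Fin (r + 1) → ℕ) → M) :
    ∑ a ∈ indexSet3 K' (r + 1) s' with a 0 = k, F a = ∑ b ∈ indexSet3 K r s, F (Fin.cons k b) := by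
  subst hK hs
  have cons_tail : ∀ a : Fin (r + 1) → ℕ, a 0 = k → Fin.cons k (Fin.tail a) = a :=
    fun a h => h ▸ Fin.cons_self_tail a
  refine sum_bij' (fun a _ => Fin.tail a) (fun b _ => Fin.cons k b) (fun a ha => ?_)
    (fun b hb => ?_) (fun a ha => cons_tail a (mem_filter.1 ha).2) (fun b _ => Fin.tail_cons _ _)
    (fun a ha => by rw [cons_tail a (mem_filter.1 ha).2])
  · obtain ⟨ha, h0⟩ := mem_filter.1 ha
    exact (cons_mem_indexSet3 hk).1 (cons_tail a h0 ▸ ha)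
  · exact mem_filter.2 ⟨(cons_mem_indexSet3 hk).2 hb, Fin.cons_zero _ _⟩

end Indices

section Decomposition

variable {M : Type*} [AddCommMonoid M] {r : ℕ}

lemma sum_indexSet3_succ_zero (p : ℕ) (F : ℕ → (Fin r → ℕ) → M) :
    ∑ a ∈ indexSet3 (p + (r + 1)) (r + 1) 0, F (a 0) (Fin.tail a) =
      ∑ b ∈ indexSet3 (p + r) r 0, F 1 b := by
  rw [← sum_fiberwise_of_maps_to (t := {1}) (g := fun a => a 0)
      fun a ha => mem_singleton.2 (head_eq_one_of_mem_indexSet3_zero ha),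
    sum_singleton, sum_indexSet3_filter_head_eq (K := p + r) (s := 0) le_rfl (by omega) (by simp)]
  simp only [Fin.cons_zero, Fin.tail_cons]

lemma sum_indexSet3_succ (p s : ℕ) (F : ℕ → (Fin r → ℕ) → M) :
    ∑ a ∈ indexSet3 (p + (r + 1) + (s + 1)) (r + 1) (s + 1), F (a 0) (Fin.tail a) =
      ∑ b ∈ indexSet3 (p + r + (s + 1)) r (s + 1), F 1 b +
        ∑ j ∈ range (p + 1), ∑ b ∈ indexSet3 (p - j + r + s) r s, F (j + 2) b := by
  have head_mem_range :
      ∀ a ∈ indexSet3 (p + (r + 1) + (s + 1)) (r + 1) (s + 1), a 0 ∈ range (p + 3) :=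
    fun a ha => mem_range.2 (by have := head_add_le_of_mem_indexSet3 ha; omega)
  have sum_fiber_zero : ∑ a ∈ indexSet3 (p + (r + 1) + (s + 1)) (r + 1) (s + 1) with a 0 = 0,
      F (a 0) (Fin.tail a) = 0 :=
    sum_eq_zero fun a ha => by
      have := (mem_indexSet3.1 (mem_filter.1 ha).1).2.1 0
      simp [(mem_filter.1 ha).2] at this
  rw [← sum_fiberwise_of_maps_to head_mem_range, sum_range_succ', sum_range_succ', sum_fiber_zero,
    add_zero, add_comm,
    sum_indexSet3_filter_head_eq (K := p + r + (s + 1)) (s := s + 1) le_rfl (by omega) (by simp)]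
  congr 1
  refine sum_congr rfl fun j hj => ?_
  rw [sum_indexSet3_filter_head_eq (K := p - j + r + s) (s := s) (by omega)
    (by have := mem_range.1 hj; omega) (by simp)]
  simp only [Fin.cons_zero, Fin.tail_cons]

end Decomposition

section StarSums

lemma Fin.antitone_cons {α : Type*} [Preorder α] {r : ℕ} {a : α} {f : Fin r → α} :
    Antitone (Fin.cons a f : Fin (r + 1) → α) ↔ (∀ j, f j ≤ a) ∧ Antitone f := by
  rw [antitone_iff_forall_lt, antitone_iff_forall_lt]
  exact Fin.liftFun_cons (· ≥ ·)

variable {n r : ℕ}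

lemma mem_msetsStar {m : Fin r → Fin n} :
    m ∈ msetsStar n r ↔ Antitone m ∧ ∀ i, 0 < (m i : ℕ) := by
  simp [msetsStar, Antitone]

lemma castSucc_comp_mem_msetsStar {m : Fin r → Fin n} :
    Fin.castSucc ∘ m ∈ msetsStar (n + 1) r ↔ m ∈ msetsStar n r := by
  simp [mem_msetsStar, Antitone]

lemma cons_last_mem_msetsStar (hn : 0 < n) {m : Fin r → Fin (n + 1)} :
    (Fin.cons (Fin.last n) m : Fin (r + 1) → Fin (n + 1)) ∈ msetsStar (n + 1) (r + 1) ↔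
      m ∈ msetsStar (n + 1) r := by
  have : NeZero n := ⟨hn.ne'⟩
  simp [mem_msetsStar, Fin.antitone_cons, Fin.forall_fin_succ, Fin.le_last, Fin.last_pos']

lemma filter_msetsStar_head_ne_last :
    {m ∈ msetsStar (n + 1) (r + 1) | m 0 ≠ Fin.last n} =
      (msetsStar n (r + 1)).image (Fin.castSucc ∘ ·) := by
  ext m
  simp only [mem_filter, mem_image]
  constructor
  · rintro ⟨hm, h0⟩
    have hlast : ∀ i, m i ≠ Fin.last n := fun i h =>
      h0 (le_antisymm (Fin.le_last _) (h ▸ (mem_msetsStar.1 hm).1 (Fin.zero_le i)))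
    have hcomp : Fin.castSucc ∘ (fun i => (m i).castPred (hlast i)) = m :=
      funext fun i => Fin.castSucc_castPred _ _
    exact ⟨_, castSucc_comp_mem_msetsStar.1 (by rwa [hcomp]), hcomp⟩
  · rintro ⟨m, hm, rfl⟩
    exact ⟨castSucc_comp_mem_msetsStar.2 hm, Fin.castSucc_ne_last _⟩

lemma filter_msetsStar_head_eq_last (hn : 0 < n) :
    {m ∈ msetsStar (n + 1) (r + 1) | m 0 = Fin.last n} =
      (msetsStar (n + 1) r).image (Fin.cons (Fin.last n)) := by
  ext m
  simp only [mem_filter, mem_image]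
  constructor
  · rintro ⟨hm, h0⟩
    have hcons : Fin.cons (Fin.last n) (Fin.tail m) = m := h0 ▸ Fin.cons_self_tail m
    exact ⟨_, (cons_last_mem_msetsStar hn).1 (hcons ▸ hm), hcons⟩
  · rintro ⟨m, hm, rfl⟩
    exact ⟨(cons_last_mem_msetsStar hn).2 hm, Fin.cons_zero _ _⟩

lemma sum_msetsStar_succ_succ {M : Type*} [AddCommMonoid M] (hn : 0 < n)
    (f : (Fin (r + 1) → Fin (n + 1)) → M) :
    ∑ m ∈ msetsStar (n + 1) (r + 1), f m =
      ∑ m ∈ msetsStar n (r + 1), f (Fin.castSucc ∘ m) +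
        ∑ m ∈ msetsStar (n + 1) r, f (Fin.cons (Fin.last n) m) := by
  have castSucc_comp_injective :
      Function.Injective (Fin.castSucc ∘ · : (Fin (r + 1) → Fin n) → Fin (r + 1) → Fin (n + 1)) :=
    fun m m' h => funext fun i => Fin.castSucc_injective _ (congrFun h i)
  rw [← sum_filter_not_add_sum_filter _ (fun m => m 0 = Fin.last n),
    filter_msetsStar_head_ne_last, filter_msetsStar_head_eq_last hn,
    sum_image castSucc_comp_injective.injOn, sum_image (Fin.cons_right_injective _).injOn]

end StarSums

section LpolyStar

variable {n r : ℕ} (q t : ℂ)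

lemma LpolyStar_depth_zero (a : Fin 0 → ℕ) : LpolyStar n a q t = 1 := by
  simp [LpolyStar, msetsStar]

lemma LpolyStar_one_depth_succ (a : Fin (r + 1) → ℕ) : LpolyStar 1 a q t = 0 := by
  refine sum_eq_zero fun m hm => absurd ((mem_msetsStar.1 hm).2 0) ?_
  simp [Fin.fin_one_eq_zero (m 0)]

lemma LpolyStar_succ (hn : 0 < n) (a : Fin (r + 1) → ℕ) :
    LpolyStar (n + 1) a q t =
      LpolyStar n a q t + t ^ n / (1 - q ^ n) ^ a 0 * LpolyStar (n + 1) (Fin.tail a) q 1 := by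
  simp only [LpolyStar]
  rw [sum_msetsStar_succ_succ hn, mul_sum]
  congr 1
  refine sum_congr rfl fun m _ => ?_
  simp [Fin.prod_univ_succ, Fin.tail, div_eq_mul_inv]

end LpolyStar

noncomputable def Gstar (n : ℕ) (q : ℂ) (k r s : ℕ) : ℂ :=
  ∑ a ∈ indexSet3 k r s, LpolyStar n a q 1

section Gstar

variable {n r : ℕ} (q : ℂ)

lemma coeff_PhiStarOne (e : Fin 3 →₀ ℕ) :
    coeff e (PhiStarOne n q) = Gstar n q (e 0 + e 1 + 2 * e 2) (e 1 + e 2) (e 2) := rfl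

lemma Gstar_depth_zero (k s : ℕ) : Gstar n q k 0 s = if k = 0 ∧ s = 0 then 1 else 0 := by
  rw [Gstar, indexSet3_depth_zero]
  split_ifs <;> simp [LpolyStar_depth_zero]

lemma Gstar_one_depth_succ (k s : ℕ) : Gstar 1 q k (r + 1) s = 0 :=
  sum_eq_zero fun a _ => LpolyStar_one_depth_succ q 1 a

lemma Gstar_succ_depth_succ (hn : 0 < n) (k s : ℕ) :
    Gstar (n + 1) q k (r + 1) s = Gstar n q k (r + 1) s +
      ∑ a ∈ indexSet3 k (r + 1) s, (1 - q ^ n)⁻¹ ^ a 0 * LpolyStar (n + 1) (Fin.tail a) q 1 := by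
  simp only [Gstar, LpolyStar_succ q 1 hn, sum_add_distrib, one_pow, one_div, inv_pow]

lemma Gstar_succ_height_zero (hn : 0 < n) (p : ℕ) :
    Gstar (n + 1) q (p + (r + 1)) (r + 1) 0 =
      Gstar n q (p + (r + 1)) (r + 1) 0 + (1 - q ^ n)⁻¹ * Gstar (n + 1) q (p + r) r 0 := by
  rw [Gstar_succ_depth_succ q hn,
    sum_indexSet3_succ_zero p fun k b => (1 - q ^ n)⁻¹ ^ k * LpolyStar (n + 1) b q 1]
  simp only [Gstar, mul_sum, pow_one]

lemma Gstar_succ (hn : 0 < n) (p s : ℕ) :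
    Gstar (n + 1) q (p + (r + 1) + (s + 1)) (r + 1) (s + 1) =
      Gstar n q (p + (r + 1) + (s + 1)) (r + 1) (s + 1) +
        (1 - q ^ n)⁻¹ * Gstar (n + 1) q (p + r + (s + 1)) r (s + 1) +
        ∑ j ∈ range (p + 1), (1 - q ^ n)⁻¹ ^ (j + 2) * Gstar (n + 1) q (p - j + r + s) r s := by
  rw [Gstar_succ_depth_succ q hn,
    sum_indexSet3_succ p s fun k b => (1 - q ^ n)⁻¹ ^ k * LpolyStar (n + 1) b q 1]
  simp only [Gstar, mul_sum, pow_one, add_assoc]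

end Gstar

section DivLinear

variable {σ K : Type*} [Field K]

lemma MvPowerSeries.coeff_X_mul_eq_ite (s : σ) (φ : MvPowerSeries σ K) (e : σ →₀ ℕ) :
    coeff e (X s * φ) = if e s = 0 then 0 else coeff (e - Finsupp.single s 1) φ := by
  classical
  rw [X_def, coeff_monomial_mul]
  simp [Finsupp.single_le_iff, Nat.one_le_iff_ne_zero, ite_not]

/-- `Φ / (1 - X s - c)`, expanded as `Σ_k (1 - c)^{-(k+1)} (X s)^k Φ`. -/
noncomputable def divLinear (s : σ) (c : K) (Φ : MvPowerSeries σ K) : MvPowerSeries σ K :=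
  fun e => ∑ k ∈ range (e s + 1), (1 - c)⁻¹ ^ (k + 1) * coeff (e - Finsupp.single s k) Φ

lemma coeff_divLinear (s : σ) (c : K) (Φ : MvPowerSeries σ K) (e : σ →₀ ℕ) :
    coeff e (divLinear s c Φ) =
      ∑ k ∈ range (e s + 1), (1 - c)⁻¹ ^ (k + 1) * coeff (e - Finsupp.single s k) Φ :=
  rfl

lemma coeff_divLinear_mul_one_sub (s : σ) {c : K} (hc : c ≠ 1) (Φ : MvPowerSeries σ K)
    (e : σ →₀ ℕ) :
    coeff e (divLinear s c Φ) * (1 - c) = coeff e Φ +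
      if e s = 0 then 0 else coeff (e - Finsupp.single s 1) (divLinear s c Φ) := by
  have hA : (1 - c)⁻¹ * (1 - c) = 1 := inv_mul_cancel₀ (sub_ne_zero.2 hc.symm)
  simp only [coeff_divLinear]
  rcases he : e s with _ | p
  · simp only [zero_add, range_one, sum_singleton, Finsupp.single_zero, tsub_zero, if_true]
    linear_combination coeff e Φ * hA
  · have hshift : ∀ k, e - Finsupp.single s 1 - Finsupp.single s k = e - Finsupp.single s (k + 1) :=
      fun k => by rw [tsub_tsub, ← Finsupp.single_add, add_comm]
    simp only [Nat.add_one_ne_zero, if_false, Finsupp.coe_tsub, Pi.sub_apply, he,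
      Finsupp.single_eq_same, Nat.add_sub_cancel, hshift]
    rw [sum_mul, sum_range_succ', Finsupp.single_zero, tsub_zero, add_comm]
    congr 1
    · linear_combination coeff e Φ * hA
    · exact sum_congr rfl fun k _ => by
        linear_combination (1 - c)⁻¹ ^ (k + 1) * coeff (e - Finsupp.single s (k + 1)) Φ * hA

lemma divLinear_mul (s : σ) {c : K} (hc : c ≠ 1) (Φ : MvPowerSeries σ K) :
    divLinear s c Φ * (1 - X s - C c) = Φ := by
  ext e
  rw [mul_sub, mul_sub, mul_one, map_sub, map_sub, mul_comm _ (X s), coeff_X_mul_eq_ite,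
    coeff_mul_C]
  linear_combination coeff_divLinear_mul_one_sub s hc Φ e

end DivLinear

lemma PhiStarOne_one (q : ℂ) : PhiStarOne 1 q = 1 := by
  ext e
  rw [coeff_PhiStarOne, coeff_one]
  rcases h : e 1 + e 2 with _ | r
  · obtain ⟨h1, h2⟩ : e 1 = 0 ∧ e 2 = 0 := by omega
    have he : e = 0 ↔ e 0 = 0 := by simp [Finsupp.ext_iff, Fin.forall_fin_succ, h1, h2]
    simp [Gstar_depth_zero, he, h1, h2]
  · rw [Gstar_one_depth_succ, if_neg]
    rintro rfl
    simp at h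

lemma PhiStarOne_succ {n : ℕ} (hn : 0 < n) (q : ℂ) :
    PhiStarOne (n + 1) q = PhiStarOne n q
      + Xv 1 * (Cc (1 - q ^ n)⁻¹ * PhiStarOne (n + 1) q)
      + Xv 2 * (Cc (1 - q ^ n)⁻¹ * divLinear 0 (q ^ n) (PhiStarOne (n + 1) q)) := by
  ext e
  simp only [Xv, Cc, map_add, coeff_X_mul_eq_ite, coeff_C_mul, coeff_divLinear, mul_sum,
    coeff_PhiStarOne, Finsupp.coe_tsub, Pi.sub_apply, Finsupp.single_apply, Fin.isValue,
    Fin.reduceEq, if_true, if_false, tsub_zero]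
  rcases hl : e 2 with _ | s
  · rcases hj : e 1 with _ | r
    · simp [Gstar_depth_zero]
    · simpa using Gstar_succ_height_zero q hn (e 0) (r := r)
  · have hv : (if e 1 = 0 then 0 else (1 - q ^ n)⁻¹ *
          Gstar (n + 1) q (e 0 + (e 1 - 1) + 2 * (s + 1)) (e 1 - 1 + (s + 1)) (s + 1)) =
        (1 - q ^ n)⁻¹ * Gstar (n + 1) q (e 0 + (e 1 + s) + (s + 1)) (e 1 + s) (s + 1) := by
      rcases hj : e 1 with _ | j
      · simp [Gstar, indexSet3_eq_empty_of_lt]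
      · simp only [Nat.add_one_ne_zero, if_false, Nat.add_sub_cancel]
        congr 2 <;> omega
    rw [hv, show e 0 + e 1 + 2 * (s + 1) = e 0 + (e 1 + s + 1) + (s + 1) by ring,
      show e 1 + (s + 1) = e 1 + s + 1 by ring, Gstar_succ q hn]
    simp only [Nat.add_one_ne_zero, if_false, Nat.add_sub_cancel]
    congr 1
    refine sum_congr rfl fun k _ => ?_
    rw [show e 0 - k + e 1 + 2 * s = e 0 - k + (e 1 + s) + s by ring]
    ring

lemma PhiStarOne_succ_mul {n : ℕ} (hn : 0 < n) {q : ℂ} (hq : q ^ n ≠ 1) :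
    PhiStarOne (n + 1) q * ((1 - Xv 0 - Cc (q ^ n)) * (1 - Xv 1 - Cc (q ^ n)) - Xv 2) =
      PhiStarOne n q * (Cc (1 - q ^ n) * (1 - Xv 0 - Cc (q ^ n))) := by
  set Ψ := PhiStarOne (n + 1) q
  set L := 1 - Xv 0 - Cc (q ^ n)
  have hdiv : divLinear 0 (q ^ n) Ψ * L = Ψ := divLinear_mul 0 hq Ψ
  have hinv : Cc (1 - q ^ n) * Cc (1 - q ^ n)⁻¹ = 1 := by
    rw [Cc, Cc, ← map_mul, mul_inv_cancel₀ (sub_ne_zero.2 hq.symm), map_one]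
  have hsub : Cc (1 - q ^ n) = 1 - Cc (q ^ n) := by rw [Cc, Cc, map_sub, map_one]
  linear_combination Cc (1 - q ^ n) * L * PhiStarOne_succ hn q + Xv 2 * hdiv
    + (Xv 1 * L * Ψ + Xv 2 * divLinear 0 (q ^ n) Ψ * L) * hinv - Ψ * L * hsub

/-- `Φ*(1;q)·Π_{j=1}^{n-1} P*(q^j) = Π_{j=1}^{n-1}(1-q^j)(1-u-q^j)`
in `ℂ[[u,v,w]]`, where `P*(X) = (1-u-X)(1-v-X)-w`. -/
theorem PhiStarOne_eval (n : ℕ) (hn : 0 < n) (q : ℂ)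
    (hq : ∀ j : ℕ, 1 ≤ j → j ≤ n - 1 → q ^ j ≠ 1) :
    PhiStarOne n q * ∏ j ∈ Finset.Ico 1 n,
        ((1 - Xv 0 - Cc (q ^ j)) * (1 - Xv 1 - Cc (q ^ j)) - Xv 2) =
      ∏ j ∈ Finset.Ico 1 n, (Cc (1 - q ^ j) * (1 - Xv 0 - Cc (q ^ j))) := by
  induction n, hn using Nat.le_induction with
  | base => simp [PhiStarOne_one]
  | succ n hn ih =>
    rw [prod_Ico_succ_top hn, prod_Ico_succ_top hn]
    linear_combination
      (∏ j ∈ Ico 1 n, ((1 - Xv 0 - Cc (q ^ j)) * (1 - Xv 1 - Cc (q ^ j)) - Xv 2)) *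
        PhiStarOne_succ_mul hn (hq n hn (by omega))
      + Cc (1 - q ^ n) * (1 - Xv 0 - Cc (q ^ n)) * ih fun j h1 h2 => hq j h1 (by omega)
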